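/- Let R be a unital ring and let X : ℝᵒᵖ → C(Mod R) be a functor to the category of (unbounded) cochain complexes of R-modules. Assume: (1) for every k ∈ ℤ and all reals r ≤ s, the map X_s^k → X_r^k is surjective; (2) for every k ∈ ℤ and every s ∈ ℝ, the natural map X_s^k → lim_{r<s} X_r^k is an isomorphism. Then for every j ∈ ℤ and every s ∈ ℝ, the natural map H^j(X_s) → lim_{r<s} H^j(X_r) is surjective. -/

import Mathlib

open CategoryTheory CategoryTheory.Limits Opposite

/-- The restriction of a functor `X : ℝᵒᵖ ⥤ C` to the (opposite of the) ordered set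
`{t : ℝ // s < t}`. -/
def restrictGT {C : Type*} [Category C] (X : ℝᵒᵖ ⥤ C) (s : ℝ) :
    ({t : ℝ // s < t})ᵒᵖ ⥤ C :=
  (Monotone.functor (f := fun t : {t : ℝ // s < t} => (t : ℝ)) fun _ _ h => h).op ⋙ X

/-- The canonical cocone on `restrictGT X s` with apex `X s`, whose legs are the
transition maps `X t → X s` for `t > s`. -/
def coconeGT {C : Type*} [Category C] (X : ℝᵒᵖ ⥤ C) (s : ℝ) : Cocone (restrictGT X s) where
  pt := X.obj (op s)
  ι :=
    { app := fun t => X.map (homOfLE t.unop.2.le).op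
      naturality := fun a b f => by
        dsimp [restrictGT]
        rw [Category.comp_id]
        exact (X.map_comp _ _).symm }

/-- The restriction of a functor `X : ℝᵒᵖ ⥤ C` to the (opposite of the) ordered set
`{r : ℝ // r < s}`. -/
def restrictLT {C : Type*} [Category C] (X : ℝᵒᵖ ⥤ C) (s : ℝ) :
    ({r : ℝ // r < s})ᵒᵖ ⥤ C :=
  (Monotone.functor (f := fun r : {r : ℝ // r < s} => (r : ℝ)) fun _ _ h => h).op ⋙ X

/-- The canonical cone on `restrictLT X s` with apex `X s`, whose legs are the
transition maps `X s → X r` for `r < s`. -/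
def coneLT {C : Type*} [Category C] (X : ℝᵒᵖ ⥤ C) (s : ℝ) : Cone (restrictLT X s) where
  pt := X.obj (op s)
  π :=
    { app := fun r => X.map (homOfLE r.unop.2.le).op
      naturality := fun a b f => by
        dsimp [restrictLT]
        rw [Category.id_comp]
        symm
        exact (X.map_comp _ _).symm }

/-- The functor `s ↦ X_s^k` of degree-`k` components. -/
def componentFunctor {R : Type} [Ring R]
    (X : ℝᵒᵖ ⥤ CochainComplex (ModuleCat R) ℤ) (k : ℤ) : ℝᵒᵖ ⥤ ModuleCat R :=
  X ⋙ HomologicalComplex.eval (ModuleCat R) (ComplexShape.up ℤ) k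

/-- The functor `s ↦ H^j(X_s)`. -/
noncomputable def cohomologyFunctor {R : Type} [Ring R]
    (X : ℝᵒᵖ ⥤ CochainComplex (ModuleCat R) ℤ) (j : ℤ) : ℝᵒᵖ ⥤ ModuleCat R :=
  X ⋙ HomologicalComplex.homologyFunctor (ModuleCat R) (ComplexShape.up ℤ) j


open CategoryTheory CategoryTheory.Limits Opposite

section Helpers

variable {R : Type} [Ring R]

/-- The homology class of a cycle in a short complex of modules. -/
noncomputable def scls (S : ShortComplex (ModuleCat R)) (x : S.X₂) (hx : S.g x = 0) :
    S.homology :=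
  S.homologyπ (S.moduleCatCyclesIso.inv ⟨x, hx⟩)

lemma scls_congr (S : ShortComplex (ModuleCat R)) (x x' : S.X₂) (hx : S.g x = 0)
    (hx' : S.g x' = 0) (h : x = x') : scls S x hx = scls S x' hx' := by
  subst h; rfl

lemma scls_eq (S : ShortComplex (ModuleCat R)) (x : S.X₂) (hx : S.g x = 0) :
    scls S x hx = S.moduleCatHomologyIso.inv (S.moduleCatLeftHomologyData.π ⟨x, hx⟩) :=
  S.moduleCatCyclesIso_inv_π_apply ⟨x, hx⟩

lemma scls_surjective (S : ShortComplex (ModuleCat R)) (h : S.homology) :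
    ∃ (x : S.X₂) (hx : S.g x = 0), scls S x hx = h := by
  obtain ⟨⟨x, hx⟩, e⟩ := Submodule.Quotient.mk_surjective _ (S.moduleCatHomologyIso.hom h)
  refine ⟨x, hx, ?_⟩
  refine (scls_eq S x hx).trans ?_
  show S.moduleCatHomologyIso.inv (Submodule.Quotient.mk ⟨x, hx⟩) = h
  rw [e]
  exact S.moduleCatHomologyIso.hom_inv_id_apply h

lemma scls_eq_iff (S : ShortComplex (ModuleCat R)) (x x' : S.X₂) (hx : S.g x = 0)
    (hx' : S.g x' = 0) :
    scls S x hx = scls S x' hx' ↔ ∃ b : S.X₁, S.f b = x - x' := by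
  rw [scls_eq, scls_eq]
  have hinj : Function.Injective S.moduleCatHomologyIso.inv :=
    (ConcreteCategory.bijective_of_isIso S.moduleCatHomologyIso.inv).injective
  rw [hinj.eq_iff]
  show Submodule.Quotient.mk _ = Submodule.Quotient.mk _ ↔ _
  rw [Submodule.Quotient.eq]
  constructor
  · rintro ⟨b, hb⟩
    exact ⟨b, congrArg Subtype.val hb⟩
  · rintro ⟨b, hb⟩
    exact ⟨b, Subtype.ext hb⟩

lemma g_map_zero {S T : ShortComplex (ModuleCat R)} (φ : S ⟶ T) (x : S.X₂) (hx : S.g x = 0) :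
    T.g (φ.τ₂ x) = 0 := by
  have : T.g (φ.τ₂ x) = φ.τ₃ (S.g x) := ConcreteCategory.congr_hom φ.comm₂₃ x
  rw [this, hx, map_zero]

lemma scls_map {S T : ShortComplex (ModuleCat R)} (φ : S ⟶ T) (x : S.X₂) (hx : S.g x = 0)
    (hx' : T.g (φ.τ₂ x) = 0) :
    ShortComplex.homologyMap φ (scls S x hx) = scls T (φ.τ₂ x) hx' := by
  have h1 : ShortComplex.cyclesMap φ (S.moduleCatCyclesIso.inv ⟨x, hx⟩) =
      T.moduleCatCyclesIso.inv ⟨φ.τ₂ x, hx'⟩ := by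
    apply (ModuleCat.mono_iff_injective T.iCycles).mp inferInstance
    have e1 : T.iCycles ((ShortComplex.cyclesMap φ) (S.moduleCatCyclesIso.inv ⟨x, hx⟩))
        = φ.τ₂ (S.iCycles (S.moduleCatCyclesIso.inv ⟨x, hx⟩)) :=
      ConcreteCategory.congr_hom (ShortComplex.cyclesMap_i φ) _
    have e2 : S.iCycles (S.moduleCatCyclesIso.inv ⟨x, hx⟩) = x :=
      ConcreteCategory.congr_hom S.moduleCatCyclesIso_inv_iCycles ⟨x, hx⟩
    have e3 : T.iCycles (T.moduleCatCyclesIso.inv ⟨φ.τ₂ x, hx'⟩) = φ.τ₂ x :=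
      ConcreteCategory.congr_hom T.moduleCatCyclesIso_inv_iCycles ⟨φ.τ₂ x, hx'⟩
    rw [e1, e2, e3]
  have e4 : ShortComplex.homologyMap φ (S.homologyπ (S.moduleCatCyclesIso.inv ⟨x, hx⟩))
      = T.homologyπ ((ShortComplex.cyclesMap φ) (S.moduleCatCyclesIso.inv ⟨x, hx⟩)) :=
    ConcreteCategory.congr_hom (ShortComplex.homologyπ_naturality φ) _
  show ShortComplex.homologyMap φ (S.homologyπ _) = T.homologyπ _
  rw [e4, h1]

/-- Dependent choice for building compatible sequences. -/
lemma depChoice {α : ℕ → Sort*} (P : ∀ n, α n → Prop) (Rel : ∀ n, α n → α (n + 1) → Prop)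
    (h0 : ∃ a, P 0 a) (hs : ∀ n a, P n a → ∃ b, P (n + 1) b ∧ Rel n a b) :
    ∃ f : ∀ n, α n, (∀ n, P n (f n)) ∧ ∀ n, Rel n (f n) (f (n + 1)) := by
  let g : ∀ n, {a : α n // P n a} := fun n =>
    Nat.rec ⟨h0.choose, h0.choose_spec⟩
      (fun n p => ⟨(hs n p.1 p.2).choose, (hs n p.1 p.2).choose_spec.1⟩) n
  exact ⟨fun n => (g n).1, fun n => (g n).2, fun n => (hs n (g n).1 (g n).2).choose_spec.2⟩

end Helpers

set_option maxHeartbeats 1000000 in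
/-- If (1) all degreewise transition maps `X_s^k → X_r^k` are surjective and
(2) `X_s^k → lim_{r<s} X_r^k` is an isomorphism for all `k`, `s`, then the natural
map `H^j(X_s) → lim_{r<s} H^j(X_r)` is surjective for all `j`, `s`. -/
theorem cohomology_to_lim_surjective {R : Type} [Ring R]
    (X : ℝᵒᵖ ⥤ CochainComplex (ModuleCat R) ℤ)
    (h1 : ∀ (k : ℤ) (r s : ℝ) (h : r ≤ s),
      Function.Surjective ((componentFunctor X k).map (homOfLE h).op))
    (h2 : ∀ (k : ℤ) (s : ℝ),
      IsIso (limit.lift (restrictLT (componentFunctor X k) s)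
        (coneLT (componentFunctor X k) s))) :
    ∀ (j : ℤ) (s : ℝ),
      Function.Surjective (limit.lift (restrictLT (cohomologyFunctor X j) s)
        (coneLT (cohomologyFunctor X j) s)) := by
  intro j s y
  classical
  -- short complex at degree j of the complex at parameter t
  let sc : ℝ → ShortComplex (ModuleCat R) := fun t => (X.obj (op t)).sc j
  let scmap : ∀ {a b : ℝ}, a ≤ b → (sc b ⟶ sc a) := fun {a b} h =>
    (HomologicalComplex.shortComplexFunctor (ModuleCat R) (ComplexShape.up ℤ) j).map
      (X.map (homOfLE h).op)
  let cmap : ∀ (k : ℤ) {a b : ℝ}, a ≤ b →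
      ((componentFunctor X k).obj (op b) ⟶ (componentFunctor X k).obj (op a)) :=
    fun k {a b} h => (componentFunctor X k).map (homOfLE h).op
  have cmap_comp : ∀ (k : ℤ) (a b d : ℝ) (hab : a ≤ b) (hbd : b ≤ d)
      (u : (componentFunctor X k).obj (op d)),
      cmap k hab (cmap k hbd u) = cmap k (hab.trans hbd) u := by
    intro k a b d hab hbd u
    have e : cmap k hbd ≫ cmap k hab = cmap k (hab.trans hbd) := by
      show (componentFunctor X k).map _ ≫ (componentFunctor X k).map _ = _
      rw [← Functor.map_comp]
      rfl
    exact ConcreteCategory.congr_hom e u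
  -- the given compatible family of cohomology classes
  let c : ∀ t : {r : ℝ // r < s}, (sc (t : ℝ)).homology := fun t =>
    limit.π (restrictLT (cohomologyFunctor X j) s) (op t) y
  have compat : ∀ (t' t : {r : ℝ // r < s}) (h : (t' : ℝ) ≤ (t : ℝ)),
      ShortComplex.homologyMap (scmap h) (c t) = c t' := by
    intro t' t h
    have hw := limit.w (restrictLT (cohomologyFunctor X j) s)
      (show op t ⟶ op t' from (homOfLE (show t' ≤ t from h)).op)
    exact ConcreteCategory.congr_hom hw y
  -- a cofinal increasing sequence below s
  have hlt : ∀ n : ℕ, s - 1 / (n + 1) < s := fun n => by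
    have : (0 : ℝ) < 1 / (n + 1) := by positivity
    linarith
  let rs : ℕ → {r : ℝ // r < s} := fun n => ⟨s - 1 / (n + 1), hlt n⟩
  have rs_mono : ∀ {m n : ℕ}, m ≤ n → (rs m : ℝ) ≤ (rs n : ℝ) := by
    intro m n h
    have h' : (1 : ℝ) / (n + 1) ≤ 1 / (m + 1) := by
      apply one_div_le_one_div_of_le (by positivity)
      have : (m : ℝ) ≤ n := by exact_mod_cast h
      linarith
    show s - 1 / ((m : ℝ) + 1) ≤ s - 1 / ((n : ℝ) + 1)
    linarith
  have rs_cofinal : ∀ t : {r : ℝ // r < s}, ∃ n : ℕ, (t : ℝ) ≤ (rs n : ℝ) := by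
    intro t
    obtain ⟨n, hn⟩ := exists_nat_one_div_lt (sub_pos.mpr t.2)
    refine ⟨n, ?_⟩
    show (t : ℝ) ≤ s - 1 / (n + 1)
    have : (1 : ℝ) / (n + 1) < s - t := hn
    linarith
  -- recursive construction of compatible representing cocycles
  have hstep : ∀ (n : ℕ) (x : (sc (rs n : ℝ)).X₂),
      (∃ hx : (sc (rs n : ℝ)).g x = 0, scls _ x hx = c (rs n)) →
      ∃ x' : (sc (rs (n + 1) : ℝ)).X₂,
        (∃ hx' : (sc (rs (n + 1) : ℝ)).g x' = 0, scls _ x' hx' = c (rs (n + 1))) ∧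
        cmap j (rs_mono (Nat.le_succ n)) x' = x := by
    rintro n x ⟨hx, hcx⟩
    obtain ⟨w, hw, hcw⟩ := scls_surjective (sc (rs (n + 1) : ℝ)) (c (rs (n + 1)))
    have hw0 : (sc (rs n : ℝ)).g ((scmap (rs_mono (Nat.le_succ n))).τ₂ w) = 0 :=
      g_map_zero _ w hw
    have e1 : scls _ ((scmap (rs_mono (Nat.le_succ n))).τ₂ w) hw0 = scls _ x hx := by
      rw [← scls_map (scmap (rs_mono (Nat.le_succ n))) w hw hw0, hcw,
        compat (rs n) (rs (n + 1)) (rs_mono (Nat.le_succ n)), ← hcx]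
    obtain ⟨b, hb⟩ := (scls_eq_iff _ _ _ hw0 hx).mp e1
    obtain ⟨b', hb'⟩ := h1 ((ComplexShape.up ℤ).prev j) (rs n : ℝ) (rs (n + 1) : ℝ)
      (rs_mono (Nat.le_succ n)) b
    change (sc (rs (n + 1) : ℝ)).X₁ at b'
    refine ⟨w - (sc (rs (n + 1) : ℝ)).f b', ⟨?_, ?_⟩, ?_⟩
    · rw [map_sub, hw, ShortComplex.moduleCat_zero_apply, sub_zero]
    · have e2 : scls _ (w - (sc (rs (n + 1) : ℝ)).f b') (by
          rw [map_sub, hw, ShortComplex.moduleCat_zero_apply, sub_zero]) = scls _ w hw :=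
        (scls_eq_iff _ _ _ _ hw).mpr ⟨-b', by rw [map_neg]; abel⟩
      exact e2.trans hcw
    · have hcomm : (scmap (rs_mono (Nat.le_succ n))).τ₂ ((sc (rs (n + 1) : ℝ)).f b') =
          (sc (rs n : ℝ)).f ((scmap (rs_mono (Nat.le_succ n))).τ₁ b') :=
        (ConcreteCategory.congr_hom (scmap (rs_mono (Nat.le_succ n))).comm₁₂ b').symm
      have hτ1 : (scmap (rs_mono (Nat.le_succ n))).τ₁ b' = b := hb'
      show (scmap (rs_mono (Nat.le_succ n))).τ₂ (w - (sc (rs (n + 1) : ℝ)).f b') = x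
      rw [map_sub, hcomm, hτ1, hb, sub_sub_cancel]
  have h0 : ∃ x : (sc (rs 0 : ℝ)).X₂, ∃ hx : (sc (rs 0 : ℝ)).g x = 0,
      scls _ x hx = c (rs 0) := scls_surjective _ _
  obtain ⟨z, hzP, hzR⟩ := depChoice
    (fun n x => ∃ hx : (sc (rs n : ℝ)).g x = 0, scls _ x hx = c (rs n))
    (fun n x x' => cmap j (rs_mono (Nat.le_succ n)) x' = x) h0 hstep
  have hzc : ∀ n, (sc (rs n : ℝ)).g (z n) = 0 := fun n => (hzP n).choose
  have hzcls : ∀ n, scls _ (z n) (hzc n) = c (rs n) := fun n => (hzP n).choose_spec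
  have hzR' : ∀ n, cmap j (rs_mono (Nat.le_succ n)) (z (n + 1)) = z n := hzR
  have z_trans : ∀ (m n : ℕ) (h : m ≤ n), cmap j (rs_mono h) (z n) = z m := by
    intro m n h
    induction n, h using Nat.le_induction with
    | base =>
      have e : cmap j (rs_mono (le_refl m)) = 𝟙 _ := (componentFunctor X j).map_id _
      rw [e]
      rfl
    | succ n hmn ih =>
      show cmap j ((rs_mono hmn).trans (rs_mono (Nat.le_succ n))) (z (n + 1)) = z m
      rw [← cmap_comp j _ _ _ (rs_mono hmn) (rs_mono (Nat.le_succ n)) (z (n + 1)), hzR' n]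
      exact ih
  -- the compatible family of cocycles below s
  choose nn hnn using rs_cofinal
  let xf : ∀ t : {r : ℝ // r < s}, (componentFunctor X j).obj (op (t : ℝ)) := fun t =>
    cmap j (hnn t) (z (nn t))
  have welldef : ∀ (t : {r : ℝ // r < s}) (n : ℕ) (h : (t : ℝ) ≤ (rs n : ℝ)),
      cmap j h (z n) = xf t := by
    intro t n h
    rcases le_total n (nn t) with hle | hle
    · erw [← z_trans n (nn t) hle, cmap_comp]
    · show cmap j h (z n) = cmap j (hnn t) (z (nn t))
      erw [← z_trans (nn t) n hle, cmap_comp]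
  have hxf : ∀ t : {r : ℝ // r < s}, (sc (t : ℝ)).g (xf t) = 0 := fun t =>
    g_map_zero (scmap (hnn t)) (z (nn t)) (hzc (nn t))
  have sect : ∀ (a b : ({r : ℝ // r < s})ᵒᵖ) (f : a ⟶ b),
      (restrictLT (componentFunctor X j) s ⋙ forget (ModuleCat R)).map f (xf a.unop) =
        xf b.unop := by
    intro a b f
    have hba : (b.unop : ℝ) ≤ (a.unop : ℝ) := leOfHom f.unop
    show cmap j hba (xf a.unop) = xf b.unop
    have ha : (a.unop : ℝ) ≤ (rs (max (nn a.unop) (nn b.unop)) : ℝ) :=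
      le_trans (hnn a.unop) (rs_mono (le_max_left _ _))
    erw [← welldef a.unop (max (nn a.unop) (nn b.unop)) ha, cmap_comp]
    exact welldef b.unop (max (nn a.unop) (nn b.unop)) (hba.trans ha)
  -- assemble the limit element and pull it back to degree j of X_s
  let secn : (restrictLT (componentFunctor X j) s ⋙ forget (ModuleCat R)).sections :=
    ⟨fun t => xf t.unop, fun {a b} f => sect a b f⟩
  let L := (preservesLimitIso (forget (ModuleCat R)) (restrictLT (componentFunctor X j) s)).inv
    ((Types.limitEquivSections (restrictLT (componentFunctor X j) s ⋙
      forget (ModuleCat R))).symm secn)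
  have hL : ∀ t : ({r : ℝ // r < s})ᵒᵖ,
      limit.π (restrictLT (componentFunctor X j) s) t L = xf t.unop := by
    intro t
    have e1 := ConcreteCategory.congr_hom (preservesLimitIso_inv_π (forget (ModuleCat R))
      (restrictLT (componentFunctor X j) s) t)
      ((Types.limitEquivSections (restrictLT (componentFunctor X j) s ⋙
        forget (ModuleCat R))).symm secn)
    have e2 := Types.limitEquivSections_symm_apply (restrictLT (componentFunctor X j) s ⋙
      forget (ModuleCat R)) secn t
    exact e1.trans e2
  have hiso_j := h2 j s
  obtain ⟨zs, hzs0⟩ := (ConcreteCategory.bijective_of_isIso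
    (limit.lift (restrictLT (componentFunctor X j) s) (coneLT (componentFunctor X j) s))).2 L
  have hzs : limit.lift (restrictLT (componentFunctor X j) s)
      (coneLT (componentFunctor X j) s) zs = L := hzs0
  have hzst : ∀ t : {r : ℝ // r < s}, cmap j t.2.le zs = xf t := by
    intro t
    have e1 : limit.π (restrictLT (componentFunctor X j) s) (op t)
        (limit.lift (restrictLT (componentFunctor X j) s)
          (coneLT (componentFunctor X j) s) zs) = cmap j t.2.le zs :=
      ConcreteCategory.congr_hom (limit.lift_π (coneLT (componentFunctor X j) s) (op t)) zs
    rw [hzs] at e1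
    exact e1.symm.trans (hL (op t))
  -- zs is a cocycle
  have hiso_N := h2 ((ComplexShape.up ℤ).next j) s
  have hu : ∀ t : {r : ℝ // r < s},
      cmap ((ComplexShape.up ℤ).next j) t.2.le ((sc s).g zs) = 0 := by
    intro t
    have e1 : (sc (t : ℝ)).g ((scmap t.2.le).τ₂ zs) =
        (scmap t.2.le).τ₃ ((sc s).g zs) :=
      ConcreteCategory.congr_hom (scmap t.2.le).comm₂₃ zs
    have e2 : (scmap t.2.le).τ₂ zs = xf t := hzst t
    show (scmap t.2.le).τ₃ ((sc s).g zs) = 0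
    rw [← e1, e2, hxf t]
  have hcyc : (sc s).g zs = 0 := by
    apply (ConcreteCategory.bijective_of_isIso
      (limit.lift (restrictLT (componentFunctor X ((ComplexShape.up ℤ).next j)) s)
        (coneLT (componentFunctor X ((ComplexShape.up ℤ).next j)) s))).1
    show limit.lift (restrictLT (componentFunctor X ((ComplexShape.up ℤ).next j)) s)
        (coneLT (componentFunctor X ((ComplexShape.up ℤ).next j)) s) ((sc s).g zs) =
      limit.lift (restrictLT (componentFunctor X ((ComplexShape.up ℤ).next j)) s)
        (coneLT (componentFunctor X ((ComplexShape.up ℤ).next j)) s) 0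
    rw [map_zero]
    apply Concrete.limit_ext
      (F := restrictLT (componentFunctor X ((ComplexShape.up ℤ).next j)) s)
    intro t
    show limit.π (restrictLT (componentFunctor X ((ComplexShape.up ℤ).next j)) s) t
        (limit.lift (restrictLT (componentFunctor X ((ComplexShape.up ℤ).next j)) s)
          (coneLT (componentFunctor X ((ComplexShape.up ℤ).next j)) s) ((sc s).g zs)) =
      limit.π (restrictLT (componentFunctor X ((ComplexShape.up ℤ).next j)) s) t 0
    have e1 : limit.π (restrictLT (componentFunctor X ((ComplexShape.up ℤ).next j)) s) t
        (limit.lift (restrictLT (componentFunctor X ((ComplexShape.up ℤ).next j)) s)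
          (coneLT (componentFunctor X ((ComplexShape.up ℤ).next j)) s) ((sc s).g zs)) =
        cmap ((ComplexShape.up ℤ).next j) t.unop.2.le ((sc s).g zs) :=
      ConcreteCategory.congr_hom
        (limit.lift_π (coneLT (componentFunctor X ((ComplexShape.up ℤ).next j)) s) t) _
    rw [e1, hu t.unop, map_zero]
    rfl
  -- the lifted cohomology class
  refine ⟨scls (sc s) zs hcyc, ?_⟩
  show limit.lift (restrictLT (cohomologyFunctor X j) s)
      (coneLT (cohomologyFunctor X j) s) (scls (sc s) zs hcyc) = y
  apply Concrete.limit_ext (F := restrictLT (cohomologyFunctor X j) s)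
  intro t
  show limit.π (restrictLT (cohomologyFunctor X j) s) t
      (limit.lift (restrictLT (cohomologyFunctor X j) s)
        (coneLT (cohomologyFunctor X j) s) (scls (sc s) zs hcyc)) =
    limit.π (restrictLT (cohomologyFunctor X j) s) t y
  have e1 : limit.π (restrictLT (cohomologyFunctor X j) s) t
      (limit.lift (restrictLT (cohomologyFunctor X j) s)
        (coneLT (cohomologyFunctor X j) s) (scls (sc s) zs hcyc)) =
      ShortComplex.homologyMap (scmap t.unop.2.le) (scls (sc s) zs hcyc) :=
    ConcreteCategory.congr_hom (limit.lift_π (coneLT (cohomologyFunctor X j) s) t) _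
  rw [e1]
  have e2 : ShortComplex.homologyMap (scmap t.unop.2.le) (scls (sc s) zs hcyc) =
      scls _ ((scmap t.unop.2.le).τ₂ zs) (g_map_zero (scmap t.unop.2.le) zs hcyc) := scls_map _ _ _ _
  have e3 : scls _ ((scmap t.unop.2.le).τ₂ zs) (g_map_zero (scmap t.unop.2.le) zs hcyc) =
      scls _ (xf t.unop) (hxf t.unop) := scls_congr _ _ _ _ _ (hzst t.unop)
  have e4 : scls (sc (t.unop : ℝ)) (xf t.unop) (hxf t.unop) =
      ShortComplex.homologyMap (scmap (hnn t.unop))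
        (scls _ (z (nn t.unop)) (hzc (nn t.unop))) :=
    (scls_map (scmap (hnn t.unop)) (z (nn t.unop)) (hzc (nn t.unop)) (hxf t.unop)).symm
  rw [e2, e3, e4, hzcls (nn t.unop), compat t.unop (rs (nn t.unop)) (hnn t.unop)]
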